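/- The spectral norm of the n×n circulant matrix C(P) = circ(P_0, P_1, ..., P_{n-1}) of Cordonnier (Padovan) numbers equals P_{n+4} - 2. -/
import Mathlib

/-- The Cordonnier (Padovan) sequence: P 0 = P 1 = P 2 = 1, P (n+3) = P (n+1) + P n. -/
def cordonnier : ℕ → ℤ
  | 0 => 1
  | 1 => 1
  | 2 => 1
  | (n + 3) => cordonnier (n + 1) + cordonnier n

lemma cordonnier_rec (n : ℕ) : cordonnier (n + 3) = cordonnier (n + 1) + cordonnier n := rfl

lemma cordonnier_pos : ∀ m, 1 ≤ cordonnier m := by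
  intro m
  induction m using Nat.strong_induction_on with
  | _ m ih =>
    match m with
    | 0 => simp [cordonnier]
    | 1 => simp [cordonnier]
    | 2 => simp [cordonnier]
    | (k+3) =>
      have h1 := ih (k+1) (by omega)
      have h2 := ih k (by omega)
      rw [cordonnier_rec]; omega

lemma cordonnier_sum (n : ℕ) :
    ∑ k ∈ Finset.range n, cordonnier k = cordonnier (n + 4) - 2 := by
  induction n with
  | zero => simp [show cordonnier 4 = 2 from rfl]
  | succ n ih =>
    rw [Finset.sum_range_succ, ih]
    have h5 : cordonnier (n + 5) = cordonnier (n + 3) + cordonnier (n + 2) :=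
      cordonnier_rec (n + 2)
    have h4 : cordonnier (n + 4) = cordonnier (n + 2) + cordonnier (n + 1) :=
      cordonnier_rec (n + 1)
    have h3 := cordonnier_rec n
    have : n + 1 + 4 = n + 5 := by ring
    rw [this]
    omega

theorem spectral_norm_circulant_cordonnier (n : ℕ) (hn : 1 ≤ n)
    (M : Matrix (Fin n) (Fin n) ℝ)
    (hM : ∀ i j : Fin n, M i j = (cordonnier ((j - i : Fin n) : ℕ) : ℝ)) :
    ‖Matrix.toEuclideanCLM (𝕜 := ℝ) M‖ = (cordonnier (n + 4) : ℝ) - 2 := by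
  have : NeZero n := ⟨by omega⟩
  set s : ℝ := (cordonnier (n + 4) : ℝ) - 2 with hs_def
  set f := Matrix.toEuclideanCLM (𝕜 := ℝ) M with hf
  -- s equals the sum of the first n Cordonnier numbers
  have hs_sum : s = ∑ k : Fin n, (cordonnier (k : ℕ) : ℝ) := by
    rw [hs_def, Fin.sum_univ_eq_sum_range (fun k => (cordonnier k : ℝ)) n]
    rw [← Int.cast_sum, cordonnier_sum]
    push_cast; ring
  -- entries are nonnegative
  have hMnn : ∀ i j, 0 ≤ M i j := by
    intro i j; rw [hM]
    exact_mod_cast le_trans zero_le_one (cordonnier_pos _)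
  -- row sums
  have hrow : ∀ i, ∑ j, M i j = s := by
    intro i
    rw [hs_sum]
    calc ∑ j, M i j = ∑ j, (cordonnier ((j - i : Fin n) : ℕ) : ℝ) := by
          simp only [hM]
      _ = ∑ j, (cordonnier ((j : Fin n) : ℕ) : ℝ) :=
          Equiv.sum_comp (Equiv.subRight i) (fun j => (cordonnier ((j : Fin n) : ℕ) : ℝ))
  -- column sums
  have hcol : ∀ j, ∑ i, M i j = s := by
    intro j
    rw [hs_sum]
    calc ∑ i, M i j = ∑ i, (cordonnier ((j - i : Fin n) : ℕ) : ℝ) := by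
          simp only [hM]
      _ = ∑ i, (cordonnier ((i : Fin n) : ℕ) : ℝ) :=
          Equiv.sum_comp (Equiv.subLeft j) (fun i => (cordonnier ((i : Fin n) : ℕ) : ℝ))
  have hs_nn : 0 ≤ s := by
    rw [hs_sum]
    exact Finset.sum_nonneg fun k _ =>
      (by exact_mod_cast le_trans zero_le_one (cordonnier_pos _) : (0:ℝ) ≤ _)
  -- application of f
  have happ : ∀ (x : EuclideanSpace ℝ (Fin n)) (i : Fin n), f x i = ∑ j, M i j * x j :=
    fun x i => rfl
  apply le_antisymm
  · -- upper bound
    apply ContinuousLinearMap.opNorm_le_bound _ hs_nn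
    intro x
    have hbound : ∑ i, (f x i) ^ 2 ≤ s ^ 2 * ∑ j, (x j) ^ 2 := by
      have step1 : ∀ i, (f x i) ^ 2 ≤ s * ∑ j, M i j * (x j) ^ 2 := by
        intro i
        rw [happ]
        have hcs := Finset.sum_mul_sq_le_sq_mul_sq Finset.univ
          (fun j => Real.sqrt (M i j)) (fun j => Real.sqrt (M i j) * x j)
        have e1 : ∀ j : Fin n,
            Real.sqrt (M i j) * (Real.sqrt (M i j) * x j) = M i j * x j := by
          intro j
          rw [← mul_assoc, Real.mul_self_sqrt (hMnn i j)]
        have e2 : ∀ j : Fin n, (Real.sqrt (M i j)) ^ 2 = M i j := by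
          intro j; rw [Real.sq_sqrt (hMnn i j)]
        have e3 : ∀ j : Fin n, (Real.sqrt (M i j) * x j) ^ 2 = M i j * (x j) ^ 2 := by
          intro j; rw [mul_pow, Real.sq_sqrt (hMnn i j)]
        simp only [e1, e2, e3] at hcs
        rwa [hrow i] at hcs
      calc ∑ i, (f x i) ^ 2 ≤ ∑ i, s * ∑ j, M i j * (x j) ^ 2 :=
            Finset.sum_le_sum fun i _ => step1 i
        _ = s * ∑ j, (∑ i, M i j) * (x j) ^ 2 := by
            rw [← Finset.mul_sum, Finset.sum_comm]
            congr 1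
            exact Finset.sum_congr rfl fun j _ => (Finset.sum_mul _ _ _).symm
        _ = s ^ 2 * ∑ j, (x j) ^ 2 := by
            simp only [hcol]
            rw [← Finset.mul_sum]
            ring
    have hnorm_fx : ‖f x‖ = Real.sqrt (∑ i, (f x i) ^ 2) := by
      rw [EuclideanSpace.norm_eq]
      congr 1
      exact Finset.sum_congr rfl fun i _ => by rw [Real.norm_eq_abs, sq_abs]
    have hnorm_x : ‖x‖ = Real.sqrt (∑ j, (x j) ^ 2) := by
      rw [EuclideanSpace.norm_eq]
      congr 1
      exact Finset.sum_congr rfl fun j _ => by rw [Real.norm_eq_abs, sq_abs]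
    rw [hnorm_fx, hnorm_x]
    calc Real.sqrt (∑ i, (f x i) ^ 2) ≤ Real.sqrt (s ^ 2 * ∑ j, (x j) ^ 2) :=
          Real.sqrt_le_sqrt hbound
      _ = s * Real.sqrt (∑ j, (x j) ^ 2) := by
          rw [Real.sqrt_mul (sq_nonneg s), Real.sqrt_sq hs_nn]
  · -- lower bound via the all-ones vector
    set y : EuclideanSpace ℝ (Fin n) := (WithLp.equiv 2 (Fin n → ℝ)).symm (fun _ => 1) with hy
    have hy_coord : ∀ i : Fin n, y i = 1 := fun i => rfl
    have hfy : ∀ i : Fin n, f y i = s := by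
      intro i
      rw [happ]
      simp only [hy_coord, mul_one]
      exact hrow i
    have hny : ‖y‖ = Real.sqrt n := by
      rw [EuclideanSpace.norm_eq]
      simp [hy_coord]
    have hnfy : ‖f y‖ = s * Real.sqrt n := by
      rw [EuclideanSpace.norm_eq]
      have : ∀ i : Fin n, ‖f y i‖ ^ 2 = s ^ 2 := by
        intro i; rw [hfy, Real.norm_eq_abs, sq_abs]
      simp only [this, Finset.sum_const, Finset.card_univ, Fintype.card_fin, nsmul_eq_mul]
      rw [Real.sqrt_mul (Nat.cast_nonneg n), Real.sqrt_sq hs_nn]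
      ring
    have hle := f.le_opNorm y
    rw [hnfy, hny] at hle
    have hsq : (0:ℝ) < Real.sqrt n := by
      apply Real.sqrt_pos.mpr
      exact_mod_cast Nat.pos_of_ne_zero (by omega)
    calc s = s * Real.sqrt n / Real.sqrt n := by field_simp
      _ ≤ ‖f‖ * Real.sqrt n / Real.sqrt n := by
          gcongr
      _ = ‖f‖ := by field_simp
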